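/- Suppose n ≠ 2d. Then the set of minimum weight codewords of C^{⊗[r,m]} is exactly the union over all subsets J ⊆ {0,...,m-1} with |J| = r of the sets { h_0 ⊗ h_1 ⊗ ... ⊗ h_{m-1} : h_j is a minimum weight codeword of C for j ∈ J, and h_j = 𝟙_n for j ∉ J }. -/

import Mathlib

set_option linter.unusedSectionVars false
set_option linter.unusedVariables false
set_option maxHeartbeats 1000000


/-- The all-ones vector in `𝔽₂ⁿ`. -/
def allOnes (n : ℕ) : Fin n → ZMod 2 := fun _ => 1

/-- The Kronecker product `g_{j₀} ⊗ ⋯ ⊗ g_{j_{m-1}}`, with coordinates of `𝔽₂^{nᵐ}`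
indexed by tuples `i ∈ {0,…,n-1}ᵐ`: its `i`-th entry is `∏_ℓ g_{j_ℓ, i_ℓ}`. -/
def bvec {n k : ℕ} {ι : Type} [Fintype ι] (g : Fin k → Fin n → ZMod 2)
    (j : ι → Fin k) : (ι → Fin n) → ZMod 2 :=
  fun i => ∏ ℓ, g (j ℓ) (i ℓ)

/-- The recursive subproduct code `C^{⊗[r,m]}`: span of all `b_j` with `wt(j) ≤ r`. -/
def subprod (n k : ℕ) [NeZero k] (r : ℕ) (ι : Type) [Fintype ι] [DecidableEq ι]
    (g : Fin k → Fin n → ZMod 2) : Submodule (ZMod 2) ((ι → Fin n) → ZMod 2) :=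
  Submodule.span (ZMod 2)
    {c | ∃ j : ι → Fin k, (Finset.univ.filter fun ℓ => j ℓ ≠ 0).card ≤ r ∧ c = bvec g j}

/-- Kronecker product `d ⊗ a` of `d ∈ 𝔽₂^{nᵐ}` with `a ∈ 𝔽₂ⁿ`. -/
def tens2 {n m : ℕ} (d : (Fin m → Fin n) → ZMod 2) (a : Fin n → ZMod 2) :
    (Fin (m + 1) → Fin n) → ZMod 2 :=
  fun i => d (Fin.init i) * a (i (Fin.last m))


open Finset

lemma zmod2_cases (z : ZMod 2) : z = 0 ∨ z = 1 := by revert z; decide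

lemma zmod2_ne_zero {z : ZMod 2} (h : z ≠ 0) : z = 1 := by
  rcases zmod2_cases z with h0 | h1 <;> tauto

lemma hammingNorm_allOnes (n : ℕ) : hammingNorm (allOnes n) = n := by
  simp [hammingNorm, allOnes]

lemma hammingNorm_prodfun {n m : ℕ} (h : Fin m → Fin n → ZMod 2) :
    hammingNorm (fun i : Fin m → Fin n => ∏ ℓ, h ℓ (i ℓ)) = ∏ ℓ, hammingNorm (h ℓ) := by
  classical
  simp only [hammingNorm]
  rw [← Fintype.card_piFinset]
  congr 1
  ext i
  simp [Fintype.mem_piFinset, Finset.prod_eq_zero_iff]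

def snocEquiv (n m : ℕ) : ((Fin m → Fin n) × Fin n) ≃ (Fin (m+1) → Fin n) where
  toFun q := Fin.snoc q.1 q.2
  invFun i := (Fin.init i, i (Fin.last m))
  left_inv q := by simp
  right_inv i := by simp [Fin.snoc_init_self]

lemma hammingNorm_rows {n m : ℕ} (c : (Fin (m+1) → Fin n) → ZMod 2) :
    hammingNorm c = ∑ p : Fin m → Fin n, hammingNorm (fun t => c (Fin.snoc p t)) := by
  classical
  simp only [hammingNorm, Finset.card_filter]
  rw [← Equiv.sum_comp (snocEquiv n m) (fun i => if c i ≠ 0 then 1 else 0)]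
  rw [Fintype.sum_prod_type]
  rfl

lemma hammingNorm_tens2 {n m : ℕ} (d : (Fin m → Fin n) → ZMod 2) (a : Fin n → ZMod 2) :
    hammingNorm (tens2 d a) = hammingNorm d * hammingNorm a := by
  classical
  rw [hammingNorm_rows]
  have : ∀ p : Fin m → Fin n, (fun t => tens2 d a (Fin.snoc p t)) = fun t => d p * a t := by
    intro p; funext t; simp [tens2]
  simp only [this]
  have h2 : ∀ p : Fin m → Fin n, hammingNorm (fun t => d p * a t)
      = if d p ≠ 0 then hammingNorm a else 0 := by
    intro p
    by_cases hp : d p = 0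
    · simp [hp, hammingNorm]
    · rw [zmod2_ne_zero hp]; simp [hp, hammingNorm]
  simp only [h2]
  rw [Finset.sum_ite, Finset.sum_const, Finset.sum_const]
  simp [hammingNorm, mul_comm]

open Finset

lemma zmod2_add_eq_zero {M : Type*} [AddCommGroup M] [Module (ZMod 2) M] {x y : M} :
    x + y = 0 ↔ x = y := by
  have hyy : y + y = 0 := by
    have h1 : y + y = ((1 : ZMod 2) + 1) • y := by rw [add_smul, one_smul]
    have h2 : ((1 : ZMod 2) + 1) = 0 := by decide
    rw [h1, h2, zero_smul]
  constructor
  · intro h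
    calc x = x + (y + y) := by rw [hyy, add_zero]
    _ = (x + y) + y := by abel
    _ = y := by rw [h, zero_add]
  · intro h; rw [h, hyy]

section lin
variable {n k : ℕ} [NeZero k]
  {C Csub : Submodule (ZMod 2) (Fin n → ZMod 2)}
  {g : Fin k → Fin n → ZMod 2}

lemma g_indep (hg0 : g 0 = allOnes n) (hgsub : ∀ i, i ≠ 0 → g i ∈ Csub)
    (hsub1 : allOnes n ∉ Csub)
    (hgind : LinearIndependent (ZMod 2) (fun i : {i : Fin k // i ≠ 0} => g i.1)) :
    LinearIndependent (ZMod 2) g := by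
  rw [Fintype.linearIndependent_iff]
  intro c hc
  have hsplit : c 0 • g 0 + ∑ i ∈ Finset.univ.erase 0, c i • g i = 0 := by
    have h := Finset.add_sum_erase Finset.univ (fun i => c i • g i) (Finset.mem_univ (0 : Fin k))
    rw [hc] at h; exact h
  have hsub_sum : ∀ (f : Fin k → ZMod 2),
      (∑ i : {i : Fin k // i ≠ 0}, f i.1 • g i.1) = ∑ i ∈ Finset.univ.erase 0, f i • g i := by
    intro f
    refine (Finset.sum_subtype _ (fun x => ?_) (fun i => f i • g i)).symm
    simp [Finset.mem_erase]
  have hrest : ∀ (f : Fin k → ZMod 2), (∑ i ∈ Finset.univ.erase 0, f i • g i = 0) →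
      ∀ i, i ≠ 0 → f i = 0 := by
    intro f hf i hi
    rw [← hsub_sum] at hf
    exact (Fintype.linearIndependent_iff.mp hgind) (fun i => f i.1) hf ⟨i, hi⟩
  rcases zmod2_cases (c 0) with h0 | h0
  · rw [h0, zero_smul, zero_add] at hsplit
    intro i
    rcases eq_or_ne i 0 with rfl | hi
    · exact h0
    · exact hrest c hsplit i hi
  · exfalso
    rw [h0, one_smul] at hsplit
    have : g 0 = ∑ i ∈ Finset.univ.erase 0, c i • g i := zmod2_add_eq_zero.mp hsplit
    apply hsub1
    rw [← hg0, this]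
    exact Submodule.sum_mem _ (fun i hi => Submodule.smul_mem _ _
      (hgsub i (Finset.mem_erase.mp hi).1))

lemma C_eq_span (hC1 : allOnes n ∈ C) (hCk : Module.finrank (ZMod 2) C = k)
    (hsub : Csub ≤ C) (hg0 : g 0 = allOnes n) (hgsub : ∀ i, i ≠ 0 → g i ∈ Csub)
    (hsub1 : allOnes n ∉ Csub)
    (hgind : LinearIndependent (ZMod 2) (fun i : {i : Fin k // i ≠ 0} => g i.1)) :
    C = Submodule.span (ZMod 2) (Set.range g) := by
  have hind := g_indep hg0 hgsub hsub1 hgind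
  have hle : Submodule.span (ZMod 2) (Set.range g) ≤ C := by
    rw [Submodule.span_le]
    rintro - ⟨i, rfl⟩
    rcases eq_or_ne i 0 with rfl | hi
    · rw [hg0]; exact hC1
    · exact hsub (hgsub i hi)
  have hfr : Module.finrank (ZMod 2) (Submodule.span (ZMod 2) (Set.range g)) = k := by
    rw [finrank_span_eq_card hind, Fintype.card_fin]
  exact (Submodule.eq_of_le_of_finrank_le hle (by rw [hfr, hCk])).symm

lemma hammingNorm_compl (x : Fin n → ZMod 2) :
    hammingNorm x + hammingNorm (allOnes n + x) = n := by
  classical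
  have : (Finset.univ.filter fun i => (allOnes n + x) i ≠ 0)
      = Finset.univ.filter fun i => ¬ (x i ≠ 0) := by
    ext i
    rw [Finset.mem_filter]
    simp only [Finset.mem_filter, Finset.mem_univ, true_and, allOnes, Pi.add_apply, not_not]
    rcases zmod2_cases (x i) with h | h <;> rw [h] <;> decide
  rw [hammingNorm, hammingNorm]
  show _ = n
  rw [this]
  rw [Finset.card_filter_add_card_filter_not]
  simp

end lin

section sp
variable {n k : ℕ} [NeZero k] {g : Fin k → Fin n → ZMod 2}

lemma subprod_mono {r1 r2 : ℕ} (h : r1 ≤ r2) {ι : Type} [Fintype ι] [DecidableEq ι] :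
    subprod n k r1 ι g ≤ subprod n k r2 ι g := by
  apply Submodule.span_mono
  rintro c ⟨j, hj, rfl⟩
  exact ⟨j, hj.trans h, rfl⟩

lemma subprod_le_full (r : ℕ) {m : ℕ} :
    subprod n k r (Fin m) g ≤ subprod n k m (Fin m) g := by
  apply Submodule.span_mono
  rintro c ⟨j, hj, rfl⟩
  refine ⟨j, ?_, rfl⟩
  calc (Finset.univ.filter fun ℓ => j ℓ ≠ 0).card ≤ Finset.univ.card := Finset.card_filter_le _ _
  _ = m := by simp

lemma tens2_add {m : ℕ} (d1 d2 : (Fin m → Fin n) → ZMod 2) (a : Fin n → ZMod 2) :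
    tens2 (d1 + d2) a = tens2 d1 a + tens2 d2 a := by
  funext i; simp [tens2, add_mul]

lemma tens2_smul {m : ℕ} (s : ZMod 2) (d : (Fin m → Fin n) → ZMod 2) (a : Fin n → ZMod 2) :
    tens2 (s • d) a = s • tens2 d a := by
  funext i; simp [tens2]; ring

lemma tens2_zero {m : ℕ} (a : Fin n → ZMod 2) : tens2 (0 : (Fin m → Fin n) → ZMod 2) a = 0 := by
  funext i; simp [tens2]

lemma bvec_snoc {m : ℕ} (j : Fin (m+1) → Fin k) :
    bvec g j = tens2 (bvec g (Fin.init j)) (g (j (Fin.last m))) := by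
  funext i
  simp only [bvec, tens2, Fin.prod_univ_castSucc]
  rfl

lemma card_filter_snoc {m : ℕ} (j : Fin (m+1) → Fin k) :
    (Finset.univ.filter fun ℓ => j ℓ ≠ 0).card
      = (Finset.univ.filter fun ℓ => Fin.init j ℓ ≠ 0).card
        + (if j (Fin.last m) ≠ 0 then 1 else 0) := by
  rw [Finset.card_filter, Finset.card_filter, Fin.sum_univ_castSucc]
  rfl

lemma tens2_mem {m : ℕ} {c' : (Fin m → Fin n) → ZMod 2} {r' r : ℕ} (a : Fin k)
    (ha : r' + (if a ≠ 0 then 1 else 0) ≤ r)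
    (hc' : c' ∈ subprod n k r' (Fin m) g) :
    tens2 c' (g a) ∈ subprod n k r (Fin (m+1)) g := by
  induction hc' using Submodule.span_induction with
  | mem x hx =>
    obtain ⟨j', hj', rfl⟩ := hx
    apply Submodule.subset_span
    refine ⟨Fin.snoc j' a, ?_, ?_⟩
    · rw [card_filter_snoc]
      simp only [Fin.init_snoc, Fin.snoc_last]
      omega
    · rw [bvec_snoc]
      simp only [Fin.init_snoc, Fin.snoc_last]
  | zero => rw [tens2_zero]; exact Submodule.zero_mem _
  | add x y hx hy ihx ihy => rw [tens2_add]; exact Submodule.add_mem _ ihx ihy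
  | smul s x hx ih => rw [tens2_smul]; exact Submodule.smul_mem _ _ ih

lemma subprod_decomp {r m : ℕ} {c : (Fin (m+1) → Fin n) → ZMod 2}
    (hc : c ∈ subprod n k r (Fin (m+1)) g) :
    ∃ cs : Fin k → ((Fin m → Fin n) → ZMod 2),
      cs 0 ∈ subprod n k r (Fin m) g ∧
      (∀ a, a ≠ 0 → cs a ∈ subprod n k (r-1) (Fin m) g) ∧
      (r = 0 → ∀ a, a ≠ 0 → cs a = 0) ∧
      c = ∑ a, tens2 (cs a) (g a) := by
  induction hc using Submodule.span_induction with
  | mem x hx =>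
    obtain ⟨j, hj, rfl⟩ := hx
    refine ⟨Pi.single (j (Fin.last m)) (bvec g (Fin.init j)), ?_, ?_, ?_, ?_⟩
    · rcases eq_or_ne (j (Fin.last m)) 0 with h0 | h0
      · rw [← h0, Pi.single_eq_same]
        apply Submodule.subset_span
        refine ⟨Fin.init j, ?_, rfl⟩
        rw [card_filter_snoc j] at hj
        omega
      · rw [Pi.single_eq_of_ne (Ne.symm h0)]
        exact Submodule.zero_mem _
    · intro a ha
      rcases eq_or_ne (j (Fin.last m)) a with h0 | h0
      · rw [h0, Pi.single_eq_same]
        apply Submodule.subset_span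
        refine ⟨Fin.init j, ?_, rfl⟩
        rw [card_filter_snoc j] at hj
        rw [h0] at hj
        rw [if_pos ha] at hj
        omega
      · rw [Pi.single_eq_of_ne (Ne.symm h0)]
        exact Submodule.zero_mem _
    · intro hr a ha
      rcases eq_or_ne (j (Fin.last m)) a with h0 | h0
      · exfalso
        rw [card_filter_snoc j, h0, if_pos ha] at hj
        omega
      · rw [Pi.single_eq_of_ne (Ne.symm h0)]
    · rw [Finset.sum_eq_single (j (Fin.last m))]
      · rw [Pi.single_eq_same, bvec_snoc]
      · intro b _ hb
        rw [Pi.single_eq_of_ne hb, tens2_zero]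
      · intro h; exact absurd (Finset.mem_univ _) h
  | zero =>
    refine ⟨0, Submodule.zero_mem _, fun a _ => Submodule.zero_mem _, fun _ a _ => rfl, ?_⟩
    simp only [Pi.zero_apply, tens2_zero, Finset.sum_const_zero]
  | add x y hx hy ihx ihy =>
    obtain ⟨cs1, h01, hs1, hz1, he1⟩ := ihx
    obtain ⟨cs2, h02, hs2, hz2, he2⟩ := ihy
    refine ⟨cs1 + cs2, Submodule.add_mem _ h01 h02,
      fun a ha => Submodule.add_mem _ (hs1 a ha) (hs2 a ha), ?_, ?_⟩
    · intro hr a ha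
      simp [hz1 hr a ha, hz2 hr a ha]
    · rw [he1, he2, ← Finset.sum_add_distrib]
      congr 1; funext a
      rw [Pi.add_apply, tens2_add]
  | smul s x hx ih =>
    obtain ⟨cs1, h01, hs1, hz1, he1⟩ := ih
    refine ⟨s • cs1, Submodule.smul_mem _ _ h01,
      fun a ha => Submodule.smul_mem _ _ (hs1 a ha), ?_, ?_⟩
    · intro hr a ha
      simp [hz1 hr a ha]
    · rw [he1, Finset.smul_sum]
      congr 1; funext a
      rw [Pi.smul_apply, tens2_smul]
end sp
section ctx
variable {n k : ℕ} [NeZero k] (hk : 2 ≤ k)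
  {C Csub : Submodule (ZMod 2) (Fin n → ZMod 2)}
  {g : Fin k → Fin n → ZMod 2} {dC : ℕ}

lemma one_ne_zero_fin (hk : 2 ≤ k) : (1 : Fin k) ≠ 0 := by
  intro h
  have h1 : ((1 : Fin k) : ℕ) = 1 % k := Fin.val_one' k
  have h0 : ((0 : Fin k) : ℕ) = 0 := rfl
  rw [h] at h1
  rw [h0] at h1
  have : 1 % k = 1 := Nat.mod_eq_of_lt (by omega)
  omega

lemma dC_pos (hdex : ∃ x ∈ C, x ≠ 0 ∧ hammingNorm x = dC) : 1 ≤ dC := by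
  obtain ⟨x, _, hx0, hxd⟩ := hdex
  rw [← hxd]
  exact Nat.one_le_iff_ne_zero.mpr (hammingNorm_ne_zero_iff.mpr hx0)

lemma two_dC_lt_n (hk : 2 ≤ k)
    (hC1 : allOnes n ∈ C) (hsub : Csub ≤ C) (hsub1 : allOnes n ∉ Csub)
    (hgsub : ∀ i, i ≠ 0 → g i ∈ Csub)
    (hgind : LinearIndependent (ZMod 2) (fun i : {i : Fin k // i ≠ 0} => g i.1))
    (hdle : ∀ x ∈ C, x ≠ 0 → dC ≤ hammingNorm x)
    (hn : n ≠ 2 * dC) : 2 * dC < n := by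
  have h1 : (1 : Fin k) ≠ 0 := one_ne_zero_fin hk
  have hg1C : g 1 ∈ C := hsub (hgsub 1 h1)
  have hg1ne : g 1 ≠ 0 := hgind.ne_zero ⟨1, h1⟩
  have hcompC : allOnes n + g 1 ∈ C := Submodule.add_mem _ hC1 hg1C
  have hcompne : allOnes n + g 1 ≠ 0 := by
    intro h
    exact hsub1 (zmod2_add_eq_zero.mp h ▸ hgsub 1 h1)
  have hd1 := hdle _ hg1C hg1ne
  have hd2 := hdle _ hcompC hcompne
  have := hammingNorm_compl (g 1)
  omega

lemma row_formula {m : ℕ} (cs : Fin k → ((Fin m → Fin n) → ZMod 2)) (p : Fin m → Fin n) :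
    (fun t => (∑ a, tens2 (cs a) (g a)) (Fin.snoc p t)) = ∑ a, (cs a p) • g a := by
  funext t
  rw [Finset.sum_apply, Finset.sum_apply]
  congr 1; funext a
  simp [tens2, Fin.init_snoc, Fin.snoc_last]

lemma row_mem {m : ℕ} (hC1 : allOnes n ∈ C) (hsub : Csub ≤ C)
    (hg0 : g 0 = allOnes n) (hgsub : ∀ i, i ≠ 0 → g i ∈ Csub)
    (cs : Fin k → ((Fin m → Fin n) → ZMod 2)) (p : Fin m → Fin n) :
    (∑ a, (cs a p) • g a) ∈ C := by
  apply Submodule.sum_mem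
  intro a _
  apply Submodule.smul_mem
  rcases eq_or_ne a 0 with rfl | ha
  · rw [hg0]; exact hC1
  · exact hsub (hgsub a ha)

lemma row_eq_zero_iff {m : ℕ} (hg0 : g 0 = allOnes n)
    (hgsub : ∀ i, i ≠ 0 → g i ∈ Csub) (hsub1 : allOnes n ∉ Csub)
    (hgind : LinearIndependent (ZMod 2) (fun i : {i : Fin k // i ≠ 0} => g i.1))
    (cs : Fin k → ((Fin m → Fin n) → ZMod 2)) (p : Fin m → Fin n) :
    (∑ a, (cs a p) • g a) = 0 ↔ ∀ a, cs a p = 0 := by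
  constructor
  · intro h
    exact Fintype.linearIndependent_iff.mp (g_indep hg0 hgsub hsub1 hgind) _ h
  · intro h
    simp only [h, zero_smul, Finset.sum_const_zero]

/-- Minimum distance bound for the recursive subproduct code. -/
lemma minwt (hk : 2 ≤ k)
    (hC1 : allOnes n ∈ C) (hsub : Csub ≤ C) (hsub1 : allOnes n ∉ Csub)
    (hg0 : g 0 = allOnes n) (hgsub : ∀ i, i ≠ 0 → g i ∈ Csub)
    (hgind : LinearIndependent (ZMod 2) (fun i : {i : Fin k // i ≠ 0} => g i.1))
    (hdle : ∀ x ∈ C, x ≠ 0 → dC ≤ hammingNorm x)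
    (hdex : ∃ x ∈ C, x ≠ 0 ∧ hammingNorm x = dC)
    (hn : n ≠ 2 * dC) :
    ∀ m r, r ≤ m → ∀ c ∈ subprod n k r (Fin m) g, c ≠ 0 →
      dC ^ r * n ^ (m - r) ≤ hammingNorm c := by
  have hd1 : 1 ≤ dC := dC_pos hdex
  have hdn : 2 * dC < n := two_dC_lt_n hk hC1 hsub hsub1 hgsub hgind hdle hn
  intro m
  induction m with
  | zero =>
    intro r hr c _ hc0
    interval_cases r
    simpa using Nat.one_le_iff_ne_zero.mpr (hammingNorm_ne_zero_iff.mpr hc0)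
  | succ m ih =>
    intro r hr c hc hc0
    obtain ⟨cs, hcs0, hcss, hcsz, rfl⟩ := subprod_decomp hc
    by_cases hB : ∀ a, a ≠ 0 → cs a = 0
    · -- case A
      have hceq : ∑ a, tens2 (cs a) (g a) = tens2 (cs 0) (g 0) := by
        rw [Finset.sum_eq_single 0]
        · intro b _ hb; rw [hB b hb, tens2_zero]
        · intro h; exact absurd (Finset.mem_univ _) h
      rw [hceq]
      rw [hceq] at hc0
      have hcs0ne : cs 0 ≠ 0 := by
        intro h; rw [h, tens2_zero] at hc0; exact hc0 rfl
      rw [hammingNorm_tens2, hg0, hammingNorm_allOnes]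
      rcases Nat.lt_or_ge r (m+1) with hrm | hrm
      · have hle := ih r (by omega) (cs 0) hcs0 hcs0ne
        have harith : m + 1 - r = (m - r) + 1 := by omega
        rw [harith, pow_succ]
        calc dC ^ r * (n ^ (m - r) * n) = (dC ^ r * n ^ (m - r)) * n := by ring
        _ ≤ hammingNorm (cs 0) * n := Nat.mul_le_mul_right n hle
      · have hr' : r = m + 1 := by omega
        have hmem : cs 0 ∈ subprod n k m (Fin m) g := subprod_le_full r hcs0
        have hle := ih m le_rfl (cs 0) hmem hcs0ne
        rw [Nat.sub_self, pow_zero, mul_one] at hle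
        subst hr'
        simp only [Nat.sub_self, pow_zero, mul_one]
        calc dC ^ (m + 1) = dC ^ m * dC := by rw [pow_succ]
        _ ≤ hammingNorm (cs 0) * n := Nat.mul_le_mul hle (by omega)
    · -- case B
      push_neg at hB
      obtain ⟨a0, ha0, ha0ne⟩ := hB
      have hr0 : r ≠ 0 := fun h => ha0ne (hcsz h a0 ha0)
      have hrowle : ∀ p ∈ Finset.univ.filter (fun p => cs a0 p ≠ 0),
          dC ≤ hammingNorm (fun t => (∑ a, tens2 (cs a) (g a)) (Fin.snoc p t)) := by
        intro p hp
        rw [Finset.mem_filter] at hp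
        rw [row_formula]
        apply hdle _ (row_mem hC1 hsub hg0 hgsub cs p)
        intro h
        exact hp.2 ((row_eq_zero_iff hg0 hgsub hsub1 hgind cs p).mp h a0)
      have hwt := hammingNorm_rows (∑ a, tens2 (cs a) (g a))
      have hsum1 : ∑ p ∈ Finset.univ.filter (fun p => cs a0 p ≠ 0),
            hammingNorm (fun t => (∑ a, tens2 (cs a) (g a)) (Fin.snoc p t))
          ≤ hammingNorm (∑ a, tens2 (cs a) (g a)) := by
        rw [hwt]
        exact Finset.sum_le_sum_of_subset (Finset.filter_subset _ _)
      have hsum2 : (Finset.univ.filter (fun p => cs a0 p ≠ 0)).card * dC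
          ≤ ∑ p ∈ Finset.univ.filter (fun p => cs a0 p ≠ 0),
            hammingNorm (fun t => (∑ a, tens2 (cs a) (g a)) (Fin.snoc p t)) := by
        rw [← Finset.sum_const_nat (m := dC) (fun _ _ => rfl)]
        exact Finset.sum_le_sum hrowle
      have hwta0 : dC ^ (r-1) * n ^ (m - (r-1)) ≤ hammingNorm (cs a0) :=
        ih (r-1) (by omega) (cs a0) (hcss a0 ha0) ha0ne
      have hcard : hammingNorm (cs a0) = (Finset.univ.filter (fun p => cs a0 p ≠ 0)).card := rfl
      have harith : dC ^ r * n ^ (m + 1 - r) = (dC ^ (r-1) * n ^ (m - (r-1))) * dC := by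
        have h1 : r = (r - 1) + 1 := by omega
        have h2 : m - (r - 1) = m + 1 - r := by omega
        rw [h2]
        calc dC ^ r * n ^ (m+1-r) = dC ^ ((r-1)+1) * n ^ (m+1-r) := by rw [← h1]
        _ = (dC ^ (r-1) * n ^ (m+1-r)) * dC := by rw [pow_succ]; ring
      rw [harith]
      calc (dC ^ (r-1) * n ^ (m - (r-1))) * dC ≤ hammingNorm (cs a0) * dC :=
            Nat.mul_le_mul_right dC hwta0
      _ = (Finset.univ.filter (fun p => cs a0 p ≠ 0)).card * dC := by rw [hcard]
      _ ≤ _ := le_trans hsum2 hsum1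

end ctx
section ctx2
variable {n k : ℕ} [NeZero k]
  {C Csub : Submodule (ZMod 2) (Fin n → ZMod 2)}
  {g : Fin k → Fin n → ZMod 2} {dC : ℕ}

lemma tens2_sum_right {m : ℕ} (d : (Fin m → Fin n) → ZMod 2) {α : Type*} (s : Finset α)
    (f : α → (Fin n → ZMod 2)) :
    tens2 d (∑ a ∈ s, f a) = ∑ a ∈ s, tens2 d (f a) := by
  funext i
  rw [Finset.sum_apply]
  simp only [tens2, Finset.sum_apply, Finset.mul_sum]

lemma tens2_smul_right {m : ℕ} (d : (Fin m → Fin n) → ZMod 2) (s : ZMod 2)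
    (a : Fin n → ZMod 2) : tens2 d (s • a) = s • tens2 d a := by
  funext i; simp [tens2]; ring

lemma card_via_castSucc {m : ℕ} (J : Finset (Fin (m+1))) :
    J.card = (Finset.univ.filter fun ℓ : Fin m => Fin.castSucc ℓ ∈ J).card
      + (if Fin.last m ∈ J then 1 else 0) := by
  have h0 : J = Finset.univ.filter (· ∈ J) := by
    ext x; simp
  conv_lhs => rw [h0]
  rw [Finset.card_filter, Finset.card_filter, Fin.sum_univ_castSucc]

lemma tensor_form_eq {m : ℕ} (h : Fin (m+1) → Fin n → ZMod 2) :
    (fun i => ∏ ℓ, h ℓ (i ℓ))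
      = tens2 (fun i' : Fin m → Fin n => ∏ ℓ, h (Fin.castSucc ℓ) (i' ℓ)) (h (Fin.last m)) := by
  funext i
  rw [Fin.prod_univ_castSucc]
  rfl

lemma tensor_mem_subprod (hC1 : allOnes n ∈ C) (hCk : Module.finrank (ZMod 2) C = k)
    (hsub : Csub ≤ C) (hg0 : g 0 = allOnes n) (hgsub : ∀ i, i ≠ 0 → g i ∈ Csub)
    (hsub1 : allOnes n ∉ Csub)
    (hgind : LinearIndependent (ZMod 2) (fun i : {i : Fin k // i ≠ 0} => g i.1)) :
    ∀ m r (J : Finset (Fin m)), J.card ≤ r → ∀ h : Fin m → Fin n → ZMod 2,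
      (∀ ℓ ∈ J, h ℓ ∈ C) → (∀ ℓ ∉ J, h ℓ = allOnes n) →
      (fun i => ∏ ℓ, h ℓ (i ℓ)) ∈ subprod n k r (Fin m) g := by
  have hspan := C_eq_span hC1 hCk hsub hg0 hgsub hsub1 hgind
  intro m
  induction m with
  | zero =>
    intro r J hJ h _ _
    apply Submodule.subset_span
    refine ⟨fun ℓ => 0, by simp, ?_⟩
    funext i
    simp [bvec]
  | succ m ih =>
    intro r J hJ h hmem hones
    set J' : Finset (Fin m) := Finset.univ.filter (fun ℓ : Fin m => Fin.castSucc ℓ ∈ J) with hJ'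
    have hcard := card_via_castSucc J
    rw [← hJ'] at hcard
    have hih : ∀ r', J'.card ≤ r' →
        (fun i' : Fin m → Fin n => ∏ ℓ, h (Fin.castSucc ℓ) (i' ℓ)) ∈ subprod n k r' (Fin m) g := by
      intro r' hr'
      apply ih r' J' hr' (fun ℓ => h (Fin.castSucc ℓ))
      · intro ℓ hℓ
        exact hmem _ ((Finset.mem_filter.mp hℓ).2)
      · intro ℓ hℓ
        apply hones
        intro hc
        exact hℓ (Finset.mem_filter.mpr ⟨Finset.mem_univ _, hc⟩)
    rw [tensor_form_eq h]
    by_cases hlast : Fin.last m ∈ J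
    · -- h last ∈ C
      have hr1 : 1 ≤ r := by
        have : 1 ≤ J.card := Finset.card_pos.mpr ⟨_, hlast⟩
        omega
      rw [if_pos hlast] at hcard
      have hc' := hih (r-1) (by omega)
      have hlC : h (Fin.last m) ∈ C := hmem _ hlast
      rw [hspan] at hlC
      obtain ⟨u, hu⟩ := (Submodule.mem_span_range_iff_exists_fun (ZMod 2)).mp hlC
      rw [← hu, tens2_sum_right]
      apply Submodule.sum_mem
      intro a _
      rw [tens2_smul_right]
      apply Submodule.smul_mem
      refine tens2_mem a ?_ hc'
      split <;> omega
    · rw [if_neg hlast] at hcard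
      rw [hones _ hlast, ← hg0]
      exact tens2_mem 0 (by simp) (hih r (by omega))

end ctx2
section ctx3
variable {n k : ℕ} [NeZero k]
  {C Csub : Submodule (ZMod 2) (Fin n → ZMod 2)}
  {g : Fin k → Fin n → ZMod 2} {dC : ℕ}

lemma sum_force {α : Type*} (s : Finset α) (f : α → ℕ) (d : ℕ)
    (hle : ∀ x ∈ s, d ≤ f x) (hsum : ∑ x ∈ s, f x = s.card * d) : ∀ x ∈ s, f x = d := by
  intro x hx
  by_contra hne
  have hlt : d < f x := lt_of_le_of_ne (hle x hx) (Ne.symm hne)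
  have h1 : ∑ _y ∈ s, d < ∑ y ∈ s, f y := Finset.sum_lt_sum hle ⟨x, hx, hlt⟩
  rw [Finset.sum_const, smul_eq_mul] at h1
  omega

lemma zmod2_fun_eq_of_supp {β : Type*} (x y : β → ZMod 2)
    (h : ∀ p, x p ≠ 0 ↔ y p ≠ 0) : x = y := by
  funext p
  have hp := h p
  rcases zmod2_cases (x p) with h1 | h1 <;> rcases zmod2_cases (y p) with h2 | h2 <;>
    rw [h1, h2] at hp ⊢ <;> simp at hp ⊢

lemma tensor_weight {m : ℕ} (J : Finset (Fin m)) (h : Fin m → Fin n → ZMod 2)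
    (hJ : ∀ ℓ ∈ J, hammingNorm (h ℓ) = dC) (hout : ∀ ℓ ∉ J, h ℓ = allOnes n) :
    hammingNorm (fun i : Fin m → Fin n => ∏ ℓ, h ℓ (i ℓ)) = dC ^ J.card * n ^ (m - J.card) := by
  rw [hammingNorm_prodfun]
  rw [← Finset.prod_mul_prod_compl J]
  congr 1
  · rw [Finset.prod_congr rfl hJ, Finset.prod_const]
  · have : ∀ ℓ ∈ Jᶜ, hammingNorm (h ℓ) = n := by
      intro ℓ hℓ
      rw [hout ℓ (Finset.mem_compl.mp hℓ), hammingNorm_allOnes]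
    rw [Finset.prod_congr rfl this, Finset.prod_const, Finset.card_compl, Fintype.card_fin]

end ctx3
section ctx4
variable {n k : ℕ} [NeZero k]
  {C Csub : Submodule (ZMod 2) (Fin n → ZMod 2)}
  {g : Fin k → Fin n → ZMod 2} {dC : ℕ}

lemma struct (hk : 2 ≤ k)
    (hC1 : allOnes n ∈ C) (hCk : Module.finrank (ZMod 2) C = k)
    (hsub : Csub ≤ C) (hsub1 : allOnes n ∉ Csub)
    (hg0 : g 0 = allOnes n) (hgsub : ∀ i, i ≠ 0 → g i ∈ Csub)
    (hgind : LinearIndependent (ZMod 2) (fun i : {i : Fin k // i ≠ 0} => g i.1))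
    (hdle : ∀ x ∈ C, x ≠ 0 → dC ≤ hammingNorm x)
    (hdex : ∃ x ∈ C, x ≠ 0 ∧ hammingNorm x = dC)
    (hn : n ≠ 2 * dC) :
    ∀ m r, r ≤ m → ∀ c ∈ subprod n k r (Fin m) g,
      hammingNorm c = dC ^ r * n ^ (m - r) →
      ∃ J : Finset (Fin m), J.card = r ∧
        ∃ h : Fin m → Fin n → ZMod 2,
          (∀ ℓ ∈ J, h ℓ ∈ C ∧ hammingNorm (h ℓ) = dC) ∧
          (∀ ℓ ∉ J, h ℓ = allOnes n) ∧
          c = fun i => ∏ ℓ, h ℓ (i ℓ) := by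
  have hd1 : 1 ≤ dC := dC_pos hdex
  have hdn : 2 * dC < n := two_dC_lt_n hk hC1 hsub hsub1 hgsub hgind hdle hn
  have hn0 : 0 < n := by omega
  intro m
  induction m with
  | zero =>
    intro r hr c _ hwt
    interval_cases r
    refine ⟨∅, rfl, fun _ => allOnes n, by simp, fun _ _ => rfl, ?_⟩
    simp only [pow_zero, Nat.sub_zero, mul_one] at hwt
    haveI : Subsingleton (Fin 0 → Fin n) := ⟨fun a b => funext fun x => x.elim0⟩
    have hne : c ≠ 0 := by
      intro h; rw [h, hammingNorm_zero] at hwt; omega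
    have ⟨i0, hi0⟩ : ∃ i0, c i0 ≠ 0 := by
      by_contra hh; push_neg at hh
      exact hne (funext fun i => hh i)
    funext i
    rw [Subsingleton.elim i i0]
    rw [zmod2_ne_zero hi0]
    simp
  | succ m ih =>
    intro r hr c hc hwt
    obtain ⟨cs, hcs0, hcss, hcsz, rfl⟩ := subprod_decomp hc
    by_cases hB : ∀ a, a ≠ 0 → cs a = 0
    · -- Case A : c = cs 0 ⊗ 1
      have hceq : (∑ a, tens2 (cs a) (g a)) = tens2 (cs 0) (g 0) := by
        rw [Finset.sum_eq_single 0]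
        · intro b _ hb; rw [hB b hb, tens2_zero]
        · intro h; exact absurd (Finset.mem_univ _) h
      rw [hceq] at hwt ⊢
      have hwt' : hammingNorm (cs 0) * n = dC ^ r * n ^ (m + 1 - r) := by
        rw [← hwt, hammingNorm_tens2, hg0, hammingNorm_allOnes]
      have hDpos : 0 < dC ^ r * n ^ (m + 1 - r) :=
        Nat.mul_pos (pow_pos (by omega) r) (pow_pos hn0 _)
      have hcs0ne : cs 0 ≠ 0 := by
        intro h
        rw [h, hammingNorm_zero, zero_mul] at hwt'
        omega
      rcases Nat.lt_or_ge r (m+1) with hrm | hrm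
      · -- r ≤ m
        have hwt0 : hammingNorm (cs 0) = dC ^ r * n ^ (m - r) := by
          apply Nat.eq_of_mul_eq_mul_right hn0
          rw [hwt']
          have harith : m + 1 - r = (m - r) + 1 := by omega
          rw [harith, pow_succ]; ring
        obtain ⟨J, hJcard, h', hmemJ, houtJ, hceq0⟩ := ih r (by omega) (cs 0) hcs0 hwt0
        refine ⟨J.map Fin.castSuccEmb, by rw [Finset.card_map, hJcard],
          Fin.snoc h' (allOnes n), ?_, ?_, ?_⟩
        · intro ℓ hℓ
          obtain ⟨ℓ', hℓ', rfl⟩ := Finset.mem_map.mp hℓ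
          have hemb : (Fin.castSuccEmb ℓ' : Fin (m+1)) = Fin.castSucc ℓ' := rfl
          rw [hemb, Fin.snoc_castSucc]
          exact hmemJ ℓ' hℓ'
        · intro ℓ hℓ
          induction ℓ using Fin.lastCases with
          | last => exact Fin.snoc_last _ _
          | cast ℓ' =>
            rw [Fin.snoc_castSucc]
            apply houtJ
            intro hmem
            exact hℓ (Finset.mem_map_of_mem _ hmem)
        · funext i
          rw [Fin.prod_univ_castSucc]
          simp only [Fin.snoc_castSucc, Fin.snoc_last]
          show tens2 (cs 0) (g 0) i = _
          rw [tens2, hg0, hceq0]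
          simp [allOnes]
          rfl
      · -- r = m + 1 : impossible
        exfalso
        have hmem : cs 0 ∈ subprod n k m (Fin m) g := subprod_le_full r hcs0
        have hle := minwt hk hC1 hsub hsub1 hg0 hgsub hgind hdle hdex hn m m le_rfl
          (cs 0) hmem hcs0ne
        rw [Nat.sub_self, pow_zero, mul_one] at hle
        have hr' : r = m + 1 := by omega
        rw [hr', Nat.sub_self, pow_zero, mul_one, pow_succ] at hwt'
        have h1 : dC ^ m * n ≤ hammingNorm (cs 0) * n := Nat.mul_le_mul_right n hle
        have h2 : dC ^ m * dC < dC ^ m * n :=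
          mul_lt_mul_of_pos_left (by omega) (pow_pos (by omega) m)
        omega
    · -- Case B
      push_neg at hB
      obtain ⟨a0, ha0, ha0ne⟩ := hB
      have hr1 : 1 ≤ r := by
        rcases Nat.eq_zero_or_pos r with h | h
        · exact absurd (hcsz h a0 ha0) ha0ne
        · omega
      have hrm : r - 1 ≤ m := by omega
      -- notation
      have hRmem : ∀ p : Fin m → Fin n, (∑ a, cs a p • g a) ∈ C :=
        fun p => row_mem hC1 hsub hg0 hgsub cs p
      have hR0iff : ∀ p, (∑ a, cs a p • g a) = 0 ↔ ∀ a, cs a p = 0 :=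
        fun p => row_eq_zero_iff hg0 hgsub hsub1 hgind cs p
      have hwtrows : hammingNorm (∑ a, tens2 (cs a) (g a))
          = ∑ p : Fin m → Fin n, hammingNorm (∑ a, cs a p • g a) := by
        rw [hammingNorm_rows]
        exact Finset.sum_congr rfl (fun p _ => by rw [row_formula])
      have hdminle : dC ^ (r-1) * n ^ (m - (r-1)) ≤ hammingNorm (cs a0) :=
        minwt hk hC1 hsub hsub1 hg0 hgsub hgind hdle hdex hn m (r-1) hrm
          (cs a0) (hcss a0 ha0) ha0ne
      have hcard_e : hammingNorm (cs a0)
          = (Finset.univ.filter fun p => cs a0 p ≠ 0).card := rfl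
      have hDarith : dC ^ r * n ^ (m + 1 - r) = (dC ^ (r-1) * n ^ (m - (r-1))) * dC := by
        have h1 : r = (r - 1) + 1 := by omega
        have h2 : m - (r - 1) = m + 1 - r := by omega
        rw [h2]
        calc dC ^ r * n ^ (m+1-r) = dC ^ ((r-1)+1) * n ^ (m+1-r) := by rw [← h1]
        _ = (dC ^ (r-1) * n ^ (m+1-r)) * dC := by rw [pow_succ]; ring
      have hrowleS : ∀ p ∈ (Finset.univ.filter fun p => cs a0 p ≠ 0),
          dC ≤ hammingNorm (∑ a, cs a p • g a) := by
        intro p hp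
        rw [Finset.mem_filter] at hp
        apply hdle _ (hRmem p)
        intro h
        exact hp.2 ((hR0iff p).mp h a0)
      have hsub_le : ∑ p ∈ (Finset.univ.filter fun p => cs a0 p ≠ 0),
            hammingNorm (∑ a, cs a p • g a)
          ≤ ∑ p : Fin m → Fin n, hammingNorm (∑ a, cs a p • g a) :=
        Finset.sum_le_sum_of_subset (Finset.filter_subset _ _)
      have hcardmul : (Finset.univ.filter fun p => cs a0 p ≠ 0).card * dC
          ≤ ∑ p ∈ (Finset.univ.filter fun p => cs a0 p ≠ 0),
              hammingNorm (∑ a, cs a p • g a) := by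
        rw [← Finset.sum_const_nat (m := dC) (fun _ _ => rfl)]
        exact Finset.sum_le_sum hrowleS
      have htot : ∑ p : Fin m → Fin n, hammingNorm (∑ a, cs a p • g a)
          = (dC ^ (r-1) * n ^ (m - (r-1))) * dC := by
        rw [← hwtrows, hwt, hDarith]
      -- equalities
      have hScard : (Finset.univ.filter fun p => cs a0 p ≠ 0).card
          = dC ^ (r-1) * n ^ (m - (r-1)) := by
        rw [hcard_e] at hdminle
        have h1 : (Finset.univ.filter fun p => cs a0 p ≠ 0).card * dC
            ≤ (dC ^ (r-1) * n ^ (m - (r-1))) * dC := by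
          calc _ ≤ _ := hcardmul
          _ ≤ _ := hsub_le
          _ = _ := htot
        have := Nat.le_of_mul_le_mul_right h1 (by omega : 0 < dC)
        omega
      have hsumS : ∑ p ∈ (Finset.univ.filter fun p => cs a0 p ≠ 0),
            hammingNorm (∑ a, cs a p • g a)
          = (Finset.univ.filter fun p => cs a0 p ≠ 0).card * dC := by
        apply le_antisymm
        · calc _ ≤ _ := hsub_le
          _ = _ := htot
          _ = _ := by rw [← hScard]
        · exact hcardmul
      have hrow_d : ∀ p ∈ (Finset.univ.filter fun p => cs a0 p ≠ 0),
          hammingNorm (∑ a, cs a p • g a) = dC :=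
        sum_force _ _ dC hrowleS hsumS
      have hzero_out : ∀ p, p ∉ (Finset.univ.filter fun p => cs a0 p ≠ 0) →
          (∑ a, cs a p • g a) = 0 := by
        have hsplit := Finset.sum_filter_add_sum_filter_not Finset.univ
          (fun p => cs a0 p ≠ 0) (fun p => hammingNorm (∑ a, cs a p • g a))
        have hzero : ∑ p ∈ (Finset.univ.filter fun p => ¬ cs a0 p ≠ 0),
            hammingNorm (∑ a, cs a p • g a) = 0 := by
          have h2 : ∑ p ∈ (Finset.univ.filter fun p => cs a0 p ≠ 0),
              hammingNorm (∑ a, cs a p • g a) = (dC ^ (r-1) * n ^ (m - (r-1))) * dC := by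
            rw [hsumS, hScard]
          omega
        intro p hp
        have hp' : p ∈ (Finset.univ.filter fun p => ¬ cs a0 p ≠ 0) := by
          rw [Finset.mem_filter] at hp ⊢
          simp only [Finset.mem_univ, true_and] at hp ⊢
          tauto
        have := (Finset.sum_eq_zero_iff.mp hzero) p hp'
        exact hammingNorm_eq_zero.mp this
      have hcoeff : ∀ p, p ∉ (Finset.univ.filter fun p => cs a0 p ≠ 0) →
          ∀ a, cs a p = 0 := by
        intro p hp a
        exact (hR0iff p).mp (hzero_out p hp) a
      -- all nonzero cs a (a ≠ 0) equal cs a0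
      have hcs_eq : ∀ a, a ≠ 0 → cs a ≠ 0 → cs a = cs a0 := by
        intro a ha hane
        have hsupp_sub : (Finset.univ.filter fun p => cs a p ≠ 0)
            ⊆ (Finset.univ.filter fun p => cs a0 p ≠ 0) := by
          intro p hp
          rw [Finset.mem_filter] at hp
          by_contra hq
          exact hp.2 (hcoeff p hq a)
        have hwta : dC ^ (r-1) * n ^ (m - (r-1)) ≤ hammingNorm (cs a) :=
          minwt hk hC1 hsub hsub1 hg0 hgsub hgind hdle hdex hn m (r-1) hrm
            (cs a) (hcss a ha) hane
        have hcard_a : hammingNorm (cs a)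
            = (Finset.univ.filter fun p => cs a p ≠ 0).card := rfl
        have heq : (Finset.univ.filter fun p => cs a p ≠ 0)
            = (Finset.univ.filter fun p => cs a0 p ≠ 0) := by
          apply Finset.eq_of_subset_of_card_le hsupp_sub
          rw [hScard, ← hcard_a]
          exact hwta
        apply zmod2_fun_eq_of_supp
        intro p
        constructor
        · intro hp
          have : p ∈ (Finset.univ.filter fun p => cs a p ≠ 0) :=
            Finset.mem_filter.mpr ⟨Finset.mem_univ _, hp⟩
          rw [heq] at this
          exact (Finset.mem_filter.mp this).2
        · intro hp
          have : p ∈ (Finset.univ.filter fun p => cs a0 p ≠ 0) :=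
            Finset.mem_filter.mpr ⟨Finset.mem_univ _, hp⟩
          rw [← heq] at this
          exact (Finset.mem_filter.mp this).2
      -- the common row value
      have hAsub : (Finset.univ.filter fun a : Fin k => a ≠ 0 ∧ cs a ≠ 0)
          ⊆ Finset.univ.erase 0 := by
        intro a ha
        rw [Finset.mem_filter] at ha
        exact Finset.mem_erase.mpr ⟨ha.2.1, Finset.mem_univ _⟩
      have hhCsub : (∑ a ∈ Finset.univ.filter (fun a : Fin k => a ≠ 0 ∧ cs a ≠ 0), g a)
          ∈ Csub := by
        apply Submodule.sum_mem
        intro a ha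
        exact hgsub a (Finset.mem_filter.mp ha).2.1
      have hrowsplit : ∀ p, (∑ a, cs a p • g a)
          = cs 0 p • allOnes n + cs a0 p •
            (∑ a ∈ Finset.univ.filter (fun a : Fin k => a ≠ 0 ∧ cs a ≠ 0), g a) := by
        intro p
        have hsplit := Finset.add_sum_erase Finset.univ (fun a => cs a p • g a)
          (Finset.mem_univ (0 : Fin k))
        rw [← hsplit]
        show cs 0 p • g 0 + (∑ a ∈ Finset.univ.erase 0, cs a p • g a) = _
        rw [hg0]
        congr 1
        have hstep : ∑ a ∈ Finset.univ.erase 0, cs a p • g a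
            = ∑ a ∈ Finset.univ.filter (fun a : Fin k => a ≠ 0 ∧ cs a ≠ 0),
                cs a p • g a := by
          apply (Finset.sum_subset hAsub ?_).symm
          intro a ha hna
          rw [Finset.mem_erase] at ha
          rw [Finset.mem_filter] at hna
          push_neg at hna
          have hcsa : cs a = 0 := by
            by_contra hcc
            exact hcc (hna (Finset.mem_univ _) ha.1)
          rw [hcsa]
          simp
        rw [hstep, Finset.smul_sum]
        apply Finset.sum_congr rfl
        intro a ha
        rw [Finset.mem_filter] at ha
        rw [hcs_eq a ha.2.1 ha.2.2]
      -- c0 = 0 or c0 = e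
      have hc0cases : cs 0 = 0 ∨ cs 0 = cs a0 := by
        by_contra hcon
        push_neg at hcon
        obtain ⟨hne1, hne2⟩ := hcon
        have ⟨q, hq⟩ : ∃ q, cs 0 q ≠ 0 := by
          by_contra hh; push_neg at hh
          exact hne1 (funext fun q => hh q)
        have ⟨p, hp⟩ : ∃ p, cs 0 p ≠ cs a0 p := by
          by_contra hh; push_neg at hh
          exact hne2 (funext fun p => hh p)
        have hqS : q ∈ (Finset.univ.filter fun p => cs a0 p ≠ 0) := by
          by_contra hh
          exact hq (hcoeff q hh 0)
        have hpS : p ∈ (Finset.univ.filter fun p => cs a0 p ≠ 0) := by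
          by_contra hh
          rw [hcoeff p hh 0, hcoeff p hh a0] at hp
          exact hp rfl
        have hep : cs a0 p = 1 := zmod2_ne_zero (Finset.mem_filter.mp hpS).2
        have heq1 : cs a0 q = 1 := zmod2_ne_zero (Finset.mem_filter.mp hqS).2
        have hc0q : cs 0 q = 1 := zmod2_ne_zero hq
        have hc0p : cs 0 p = 0 := by
          rcases zmod2_cases (cs 0 p) with h | h
          · exact h
          · exact absurd (h.trans hep.symm) hp
        set hvec := (∑ a ∈ Finset.univ.filter (fun a : Fin k => a ≠ 0 ∧ cs a ≠ 0), g a)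
          with hhvec
        have hrp : (∑ a, cs a p • g a) = hvec := by
          rw [hrowsplit p, hc0p, hep]; simp
        have hrq : (∑ a, cs a q • g a) = allOnes n + hvec := by
          rw [hrowsplit q, hc0q, heq1]; simp
        have hwt_p : hammingNorm hvec = dC := by rw [← hrp]; exact hrow_d p hpS
        have hwt_q : hammingNorm (allOnes n + hvec) = dC := by
          rw [← hrq]; exact hrow_d q hqS
        have := hammingNorm_compl hvec
        omega
      -- common factor hh
      have hhfact : ∃ hh : Fin n → ZMod 2, hh ∈ C ∧
          ∀ p, (∑ a, cs a p • g a) = cs a0 p • hh := by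
        rcases hc0cases with hc0 | hc0
        · refine ⟨_, hsub hhCsub, fun p => ?_⟩
          rw [hrowsplit p, hc0]
          simp
        · refine ⟨allOnes n + (∑ a ∈ Finset.univ.filter
            (fun a : Fin k => a ≠ 0 ∧ cs a ≠ 0), g a),
            Submodule.add_mem _ hC1 (hsub hhCsub), fun p => ?_⟩
          rw [hrowsplit p, hc0, smul_add]
      obtain ⟨hh, hhC, hrow2⟩ := hhfact
      have ⟨p0, hp0⟩ : ∃ p0, p0 ∈ (Finset.univ.filter fun p => cs a0 p ≠ 0) := by
        have ⟨p0, hp0⟩ : ∃ p0, cs a0 p0 ≠ 0 := by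
          by_contra hhh; push_neg at hhh
          exact ha0ne (funext fun p => hhh p)
        exact ⟨p0, Finset.mem_filter.mpr ⟨Finset.mem_univ _, hp0⟩⟩
      have hwt_hh : hammingNorm hh = dC := by
        have h1 := hrow_d p0 hp0
        rw [hrow2 p0, zmod2_ne_zero (Finset.mem_filter.mp hp0).2, one_smul] at h1
        exact h1
      -- apply IH to e = cs a0
      have he_wt : hammingNorm (cs a0) = dC ^ (r-1) * n ^ (m - (r-1)) := by
        rw [hcard_e, hScard]
      obtain ⟨J', hJ'card, h', hmemJ', houtJ', heeq⟩ :=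
        ih (r-1) hrm (cs a0) (hcss a0 ha0) he_wt
      have hlast_notmem : Fin.last m ∉ J'.map Fin.castSuccEmb := by
        intro hmem
        obtain ⟨ℓ', _, hℓ'⟩ := Finset.mem_map.mp hmem
        exact absurd hℓ' (ne_of_lt (Fin.castSucc_lt_last ℓ'))
      refine ⟨insert (Fin.last m) (J'.map Fin.castSuccEmb), ?_, Fin.snoc h' hh, ?_, ?_, ?_⟩
      · rw [Finset.card_insert_of_notMem hlast_notmem, Finset.card_map, hJ'card]
        omega
      · intro ℓ hℓ
        rcases Finset.mem_insert.mp hℓ with rfl | hℓ'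
        · rw [Fin.snoc_last]
          exact ⟨hhC, hwt_hh⟩
        · obtain ⟨ℓ', hℓ'', rfl⟩ := Finset.mem_map.mp hℓ'
          have hemb : (Fin.castSuccEmb ℓ' : Fin (m+1)) = Fin.castSucc ℓ' := rfl
          rw [hemb, Fin.snoc_castSucc]
          exact hmemJ' ℓ' hℓ''
      · intro ℓ hℓ
        induction ℓ using Fin.lastCases with
        | last => exact absurd (Finset.mem_insert_self _ _) hℓ
        | cast ℓ' =>
          rw [Fin.snoc_castSucc]
          apply houtJ'
          intro hmem
          exact hℓ (Finset.mem_insert_of_mem (Finset.mem_map_of_mem _ hmem))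
      · funext i
        have hisnoc : Fin.snoc (Fin.init i) (i (Fin.last m)) = i := Fin.snoc_init_self i
        have h1 : (∑ a, tens2 (cs a) (g a)) i
            = (∑ a, cs a (Fin.init i) • g a) (i (Fin.last m)) := by
          conv_lhs => rw [← hisnoc]
          exact congrFun (row_formula cs (Fin.init i)) (i (Fin.last m))
        rw [h1, hrow2 (Fin.init i)]
        rw [Fin.prod_univ_castSucc]
        simp only [Fin.snoc_castSucc, Fin.snoc_last]
        rw [heeq]
        simp only [Pi.smul_apply, smul_eq_mul]
        rfl

end ctx4
theorem stmt8 (n k : ℕ) [NeZero k] (hk : 2 ≤ k)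
    (C Csub : Submodule (ZMod 2) (Fin n → ZMod 2))
    (hC1 : allOnes n ∈ C) (hCk : Module.finrank (ZMod 2) C = k)
    (hsub : Csub ≤ C) (hsubdim : Module.finrank (ZMod 2) Csub = k - 1)
    (hsub1 : allOnes n ∉ Csub)
    (g : Fin k → Fin n → ZMod 2) (hg0 : g 0 = allOnes n)
    (hgsub : ∀ i, i ≠ 0 → g i ∈ Csub)
    (hgind : LinearIndependent (ZMod 2) (fun i : {i : Fin k // i ≠ 0} => g i.1))
    (dC : ℕ)
    (hdle : ∀ x ∈ C, x ≠ 0 → dC ≤ hammingNorm x)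
    (hdex : ∃ x ∈ C, x ≠ 0 ∧ hammingNorm x = dC)
    (hn : n ≠ 2 * dC)
    (m r : ℕ) (hr : r ≤ m) :
    {c | c ∈ subprod n k r (Fin m) g ∧ hammingNorm c = dC ^ r * n ^ (m - r)} =
      {c | ∃ J : Finset (Fin m), J.card = r ∧
        ∃ h : Fin m → Fin n → ZMod 2,
          (∀ ℓ ∈ J, h ℓ ∈ C ∧ hammingNorm (h ℓ) = dC) ∧
          (∀ ℓ ∉ J, h ℓ = allOnes n) ∧
          c = fun i => ∏ ℓ, h ℓ (i ℓ)} := by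
  ext c
  simp only [Set.mem_setOf_eq]
  constructor
  · rintro ⟨hc, hwt⟩
    exact struct hk hC1 hCk hsub hsub1 hg0 hgsub hgind hdle hdex hn m r hr c hc hwt
  · rintro ⟨J, hJcard, h, hmem, hout, rfl⟩
    constructor
    · exact tensor_mem_subprod hC1 hCk hsub hg0 hgsub hsub1 hgind m r J (le_of_eq hJcard) h
        (fun ℓ hℓ => (hmem ℓ hℓ).1) hout
    · rw [tensor_weight J h (fun ℓ hℓ => (hmem ℓ hℓ).2) hout, hJcard]
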